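/- arXiv:2508.10211 — 9 statements merged into one kernel-verified Lean document; each statement's English description precedes it below -/
import Mathlib

section
/- Let C, D be symmetric n×n real matrices and s a nonzero vector in ℝⁿ. If D = (I − ssᵀ/‖s‖²) C (I − ssᵀ/‖s‖²), then ‖D‖_F² ≤ ‖C‖_F² − ‖Cs‖₂²/‖s‖₂². -/
/-!
Let `Q = ssᵀ/‖s‖²` and `P = I - Q`, both orthogonal projections. Since `PQ = 0`, the Frobenius
norm splits as `‖C‖² = ‖CP‖² + ‖CQ‖²`, and `‖CQ‖² = ‖Cs‖²/‖s‖²`. Multiplying on the left by a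
projection does not increase the Frobenius norm, so `‖PCP‖² ≤ ‖CP‖² = ‖C‖² - ‖Cs‖²/‖s‖²`.
-/

open Matrix

section Projection

variable {m n R : Type*} [Fintype m] [Fintype n] [CommRing R] {P : Matrix n n R}

theorem trace_transpose_mul_self_nonneg [LinearOrder R] [IsStrictOrderedRing R]
    (A : Matrix m n R) : 0 ≤ trace (Aᵀ * A) :=
  Finset.sum_nonneg fun _ _ => Finset.sum_nonneg fun _ _ => mul_self_nonneg _

theorem trace_transpose_mul_self_mul_of_isIdempotentElem (hPt : Pᵀ = P)
    (hP : IsIdempotentElem P) (X : Matrix m n R) :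
    trace ((X * P)ᵀ * (X * P)) = trace (Xᵀ * X * P) := by
  rw [transpose_mul, hPt, trace_mul_comm, Matrix.mul_assoc, Matrix.mul_assoc,
    ← Matrix.mul_assoc P P, hP.eq, ← Matrix.mul_assoc, trace_mul_comm, ← Matrix.mul_assoc]

variable [DecidableEq n]

theorem trace_mul_proj_add_trace_mul_one_sub_proj (hPt : Pᵀ = P) (hP : IsIdempotentElem P)
    (X : Matrix m n R) :
    trace ((X * P)ᵀ * (X * P)) + trace ((X * (1 - P))ᵀ * (X * (1 - P))) = trace (Xᵀ * X) := by
  have hPt' : (1 - P)ᵀ = 1 - P := by rw [transpose_sub, transpose_one, hPt]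
  rw [trace_transpose_mul_self_mul_of_isIdempotentElem hPt hP,
    trace_transpose_mul_self_mul_of_isIdempotentElem hPt' hP.one_sub, ← trace_add, ← mul_add,
    add_sub_cancel, Matrix.mul_one]

variable [LinearOrder R] [IsStrictOrderedRing R]

theorem trace_proj_mul_le (hPt : Pᵀ = P) (hP : IsIdempotentElem P) (X : Matrix n m R) :
    trace ((P * X)ᵀ * (P * X)) ≤ trace (Xᵀ * X) := by
  have hswap : trace ((P * X)ᵀ * (P * X)) = trace ((Xᵀ * P)ᵀ * (Xᵀ * P)) := by
    rw [trace_mul_comm, transpose_mul, transpose_mul, transpose_transpose, hPt]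
  have hflip : trace (Xᵀ * X) = trace (Xᵀᵀ * Xᵀ) := by
    rw [transpose_transpose, trace_mul_comm]
  rw [hswap, hflip, ← trace_mul_proj_add_trace_mul_one_sub_proj hPt hP Xᵀ]
  exact le_add_of_nonneg_right (trace_transpose_mul_self_nonneg _)

theorem trace_compress_one_sub_proj_le (hPt : Pᵀ = P) (hP : IsIdempotentElem P)
    (X : Matrix n n R) :
    trace (((1 - P) * X * (1 - P))ᵀ * ((1 - P) * X * (1 - P))) ≤
      trace (Xᵀ * X) - trace (Xᵀ * X * P) := by
  have hPt' : (1 - P)ᵀ = 1 - P := by rw [transpose_sub, transpose_one, hPt]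
  rw [← trace_transpose_mul_self_mul_of_isIdempotentElem hPt hP,
    ← trace_mul_proj_add_trace_mul_one_sub_proj hPt hP X, add_sub_cancel_left, Matrix.mul_assoc]
  exact trace_proj_mul_le hPt' hP.one_sub _

end Projection

section LineProjection

variable {m n R : Type*} [Fintype m] [Fintype n] [Field R]

/-- The orthogonal projection onto the line spanned by `s`; it is `0` when `s ⬝ᵥ s = 0`,
since `0⁻¹ = 0`. -/
def lineProj (s : n → R) : Matrix n n R := (s ⬝ᵥ s)⁻¹ • vecMulVec s s

theorem transpose_lineProj (s : n → R) : (lineProj s)ᵀ = lineProj s := by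
  rw [lineProj, transpose_smul, transpose_vecMulVec]

theorem isIdempotentElem_lineProj (s : n → R) : IsIdempotentElem (lineProj s) := by
  rw [IsIdempotentElem, lineProj, smul_mul_smul_comm, vecMulVec_mul_vecMulVec, vecMulVec_smul,
    smul_smul]
  congr 1
  grind

theorem trace_transpose_mul_self_mul_lineProj (X : Matrix m n R) (s : n → R) :
    trace (Xᵀ * X * lineProj s) = (X *ᵥ s ⬝ᵥ X *ᵥ s) / (s ⬝ᵥ s) := by
  rw [lineProj, Matrix.mul_smul, trace_smul, mul_vecMulVec, trace_vecMulVec, ← mulVec_mulVec,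
    mulVec_transpose, ← dotProduct_mulVec, smul_eq_mul, inv_mul_eq_div]

end LineProjection

theorem stmt_1_general (n : ℕ) (C D : Matrix (Fin n) (Fin n) ℝ) (s : Fin n → ℝ)
    (hDeq : D = (1 - (s ⬝ᵥ s)⁻¹ • vecMulVec s s) * C * (1 - (s ⬝ᵥ s)⁻¹ • vecMulVec s s)) :
    trace (Dᵀ * D) ≤ trace (Cᵀ * C) - ((C *ᵥ s) ⬝ᵥ (C *ᵥ s)) / (s ⬝ᵥ s) := by
  subst hDeq
  rw [← trace_transpose_mul_self_mul_lineProj]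
  exact trace_compress_one_sub_proj_le (transpose_lineProj s) (isIdempotentElem_lineProj s) C

/-- If D = (I − ssᵀ/‖s‖²) C (I − ssᵀ/‖s‖²) with C, D symmetric and s ≠ 0, then
‖D‖_F² ≤ ‖C‖_F² − ‖Cs‖₂²/‖s‖₂². -/
theorem stmt_1 (n : ℕ) (C D : Matrix (Fin n) (Fin n) ℝ) (s : Fin n → ℝ)
    (hC : C.IsSymm) (hD : D.IsSymm) (hs : s ≠ 0)
    (hDeq : D = (1 - (s ⬝ᵥ s)⁻¹ • vecMulVec s s) * C * (1 - (s ⬝ᵥ s)⁻¹ • vecMulVec s s)) :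
    trace (Dᵀ * D) ≤ trace (Cᵀ * C) - ((C *ᵥ s) ⬝ᵥ (C *ᵥ s)) / (s ⬝ᵥ s) :=
  stmt_1_general n C D s hDeq
end

section
/- Let L be a symmetric positive definite n×n real matrix with L ⪰ I or L ⪯ I (in the Loewner order), and let u ∈ ℝⁿ satisfy Lu ≠ u. Then ‖(L⁻¹ − I)(I − L)u‖₂²/‖(I − L)u‖₂² ≥ ‖(L⁻¹ − I)u‖₂²/‖u‖₂², with equality if and only if u is an eigenvector of L. -/
/-!
In an orthonormal eigenbasis of `L`, with eigenvalues `λᵢ > 0` and coordinates `cᵢ` of `u`, the left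
quotient is the average of `xᵢ = (λᵢ⁻¹ - 1)²` with weights `wᵢ = cᵢ²`, and the right one is the
average of the same `xᵢ` with weights `yᵢ wᵢ`, where `yᵢ = (1 - λᵢ)²`. When all `λᵢ` lie on one side
of `1`, `x` and `y` are strictly monotone functions of `λ` in the same direction, so the weighted
Chebyshev inequality `(∑ x w)(∑ y w) ≤ (∑ w)(∑ x y w)` applies. Its defect is
`½ ∑ᵢⱼ (xᵢ - xⱼ)(yᵢ - yⱼ) wᵢ wⱼ`, a sum of nonnegative terms, which vanishes exactly when `λ` is
constant on the support of `c`, i.e. when `u` is an eigenvector.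
-/

open Matrix Finset

section WeightedChebyshev

variable {ι R : Type*} (s : Finset ι) (w x y : ι → R)

theorem two_mul_sum_mul_sum_sub_sum_mul_sum [CommRing R] :
    2 * ((∑ i ∈ s, w i) * ∑ i ∈ s, x i * (y i * w i) - (∑ i ∈ s, x i * w i) * ∑ i ∈ s, y i * w i)
      = ∑ i ∈ s, ∑ j ∈ s, (x i - x j) * (y i - y j) * (w i * w j) := by
  have h : ∀ i j, (x i - x j) * (y i - y j) * (w i * w j)
      = x i * (y i * w i) * w j + w i * (x j * (y j * w j))
        - x i * w i * (y j * w j) - y i * w i * (x j * w j) := fun _ _ => by ring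
  simp only [h, sum_sub_distrib, sum_add_distrib, ← sum_mul, ← mul_sum]
  ring

variable [CommRing R] [LinearOrder R] [IsStrictOrderedRing R] {s w x y}

theorem sum_mul_sum_le_sum_mul_sum_of_pairwise_nonneg
    (h : ∀ i ∈ s, ∀ j ∈ s, 0 ≤ (x i - x j) * (y i - y j) * (w i * w j)) :
    (∑ i ∈ s, x i * w i) * (∑ i ∈ s, y i * w i) ≤ (∑ i ∈ s, w i) * ∑ i ∈ s, x i * (y i * w i) := by
  have hsum := two_mul_sum_mul_sum_sub_sum_mul_sum s w x y
  have hdefect : 0 ≤ ∑ i ∈ s, ∑ j ∈ s, (x i - x j) * (y i - y j) * (w i * w j) :=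
    sum_nonneg fun i hi => sum_nonneg fun j hj => h i hi j hj
  linarith

theorem sum_mul_sum_eq_sum_mul_sum_iff_of_pairwise_nonneg
    (h : ∀ i ∈ s, ∀ j ∈ s, 0 ≤ (x i - x j) * (y i - y j) * (w i * w j)) :
    (∑ i ∈ s, x i * w i) * (∑ i ∈ s, y i * w i) = (∑ i ∈ s, w i) * ∑ i ∈ s, x i * (y i * w i) ↔
      ∀ i ∈ s, ∀ j ∈ s, (x i - x j) * (y i - y j) * (w i * w j) = 0 := by
  have hsum := two_mul_sum_mul_sum_sub_sum_mul_sum s w x y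
  rw [eq_comm, ← sub_eq_zero, ← mul_eq_zero_iff_right (two_ne_zero (α := R)), mul_comm _ (2 : R),
    hsum, sum_eq_zero_iff_of_nonneg fun i hi => sum_nonneg fun j hj => h i hi j hj]
  exact forall₂_congr fun i hi => sum_eq_zero_iff_of_nonneg fun j hj => h i hi j hj

end WeightedChebyshev

theorem sq_inv_sub_one_sub_mul_sq_one_sub_sub_pos {s t : ℝ} (hs : 0 < s) (ht : 0 < t)
    (hside : (1 ≤ s ∧ 1 ≤ t) ∨ (s ≤ 1 ∧ t ≤ 1)) (hst : s ≠ t) :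
    0 < ((s⁻¹ - 1) ^ 2 - (t⁻¹ - 1) ^ 2) * ((1 - s) ^ 2 - (1 - t) ^ 2) := by
  have hfactor : ((s⁻¹ - 1) ^ 2 - (t⁻¹ - 1) ^ 2) * ((1 - s) ^ 2 - (1 - t) ^ 2)
      = (s - t) ^ 2 * ((s + t - 2 * s * t) * (2 - s - t)) / (s ^ 2 * t ^ 2) := by
    field_simp
    ring
  have hsq : 0 < (s - t) ^ 2 := pow_two_pos_of_ne_zero (sub_ne_zero.2 hst)
  rw [hfactor]
  refine div_pos (mul_pos hsq ?_) (by positivity)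
  rcases hside with ⟨hs1, ht1⟩ | ⟨hs1, ht1⟩
  · have h : 1 < s ∨ 1 < t := by contrapose! hst; linarith
    refine mul_pos_of_neg_of_neg ?_ (by rcases h with h | h <;> linarith)
    nlinarith [mul_nonneg (sub_nonneg.2 hs1) (sub_nonneg.2 ht1)]
  · have h : s < 1 ∨ t < 1 := by contrapose! hst; linarith
    refine mul_pos ?_ (by rcases h with h | h <;> linarith)
    rcases h with h | h
    · nlinarith [mul_nonneg hs.le (sub_nonneg.2 ht1), mul_pos ht (sub_pos.2 h)]
    · nlinarith [mul_nonneg ht.le (sub_nonneg.2 hs1), mul_pos hs (sub_pos.2 h)]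

theorem exists_forall_mul_eq_mul_iff {ι M₀ : Type*} [MonoidWithZero M₀] [IsCancelMulZero M₀]
    (a c : ι → M₀) :
    (∃ μ, ∀ i, a i * c i = μ * c i) ↔ ∀ i j, c i ≠ 0 → c j ≠ 0 → a i = a j := by
  refine ⟨fun ⟨μ, h⟩ i j hi hj =>
    (mul_right_cancel₀ hi (h i)).trans (mul_right_cancel₀ hj (h j)).symm, fun h => ?_⟩
  by_cases hc : ∃ j, c j ≠ 0
  · obtain ⟨j, hj⟩ := hc
    refine ⟨a j, fun i => ?_⟩
    rcases eq_or_ne (c i) 0 with hi | hi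
    · simp [hi]
    · rw [h i j hi hj]
  · simp only [not_exists, not_not] at hc
    exact ⟨0, fun i => by simp [hc i]⟩

theorem sum_sq_div_sum_sq_le_and_eq_iff {ι : Type*} [Fintype ι] {lam c : ι → ℝ}
    (hpos : ∀ i, 0 < lam i) (hside : (∀ i, 1 ≤ lam i) ∨ (∀ i, lam i ≤ 1))
    (hc : ∑ i, ((1 - lam i) * c i) ^ 2 ≠ 0) :
    (∑ i, (((lam i)⁻¹ - 1) * c i) ^ 2) / ∑ i, c i ^ 2
      ≤ (∑ i, (((lam i)⁻¹ - 1) * ((1 - lam i) * c i)) ^ 2) / ∑ i, ((1 - lam i) * c i) ^ 2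
    ∧ ((∑ i, (((lam i)⁻¹ - 1) * ((1 - lam i) * c i)) ^ 2) / ∑ i, ((1 - lam i) * c i) ^ 2
        = (∑ i, (((lam i)⁻¹ - 1) * c i) ^ 2) / ∑ i, c i ^ 2 ↔ ∃ μ, ∀ i, lam i * c i = μ * c i) := by
  have hden : 0 < ∑ i, ((1 - lam i) * c i) ^ 2 := lt_of_le_of_ne (by positivity) hc.symm
  have hnorm : 0 < ∑ i, c i ^ 2 := by
    refine lt_of_le_of_ne (by positivity) fun h => hc ?_
    have hzero : ∀ i, c i = 0 := by simpa [sum_eq_zero_iff_of_nonneg, sq_nonneg] using h.symm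
    simp [hzero]
  have hterm : ∀ i j,
      0 ≤ (((lam i)⁻¹ - 1) ^ 2 - ((lam j)⁻¹ - 1) ^ 2) * ((1 - lam i) ^ 2 - (1 - lam j) ^ 2)
          * (c i ^ 2 * c j ^ 2) ∧
      ((((lam i)⁻¹ - 1) ^ 2 - ((lam j)⁻¹ - 1) ^ 2) * ((1 - lam i) ^ 2 - (1 - lam j) ^ 2)
          * (c i ^ 2 * c j ^ 2) = 0 ↔ (c i ≠ 0 → c j ≠ 0 → lam i = lam j)) := by
    intro i j
    rcases eq_or_ne (lam i) (lam j) with hij | hij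
    · simp [hij]
    have hpair := sq_inv_sub_one_sub_mul_sq_one_sub_sub_pos (hpos i) (hpos j)
      (hside.imp (fun h => ⟨h i, h j⟩) (fun h => ⟨h i, h j⟩)) hij
    refine ⟨mul_nonneg hpair.le (by positivity), ?_⟩
    simp [hij, hpair.ne', or_iff_not_imp_left]
  have hnonneg := fun i (_ : i ∈ univ) j (_ : j ∈ univ) => (hterm i j).1
  simp only [mul_pow] at hden ⊢
  constructor
  · rw [div_le_div_iff₀ hnorm hden, mul_comm _ (∑ i, c i ^ 2)]
    exact sum_mul_sum_le_sum_mul_sum_of_pairwise_nonneg hnonneg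
  · rw [div_eq_div_iff hden.ne' hnorm.ne', eq_comm, mul_comm _ (∑ i, c i ^ 2),
      sum_mul_sum_eq_sum_mul_sum_iff_of_pairwise_nonneg hnonneg, exists_forall_mul_eq_mul_iff]
    simp only [mem_univ, true_implies, (hterm _ _).2]

namespace OrthonormalBasis

variable {ι : Type*} [Fintype ι] (b : OrthonormalBasis ι ℝ (EuclideanSpace ℝ ι))

theorem dotProduct_self_eq_sum_sq (z : ι → ℝ) : z ⬝ᵥ z = ∑ i, (⇑(b i) ⬝ᵥ z) ^ 2 := by
  have := b.sum_inner_mul_inner (WithLp.toLp 2 z) (WithLp.toLp 2 z)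
  simp only [EuclideanSpace.inner_eq_star_dotProduct, star_trivial] at this
  simpa [sq, dotProduct_comm] using this.symm

theorem ext_dotProduct_iff {z z' : ι → ℝ} : z = z' ↔ ∀ i, ⇑(b i) ⬝ᵥ z = ⇑(b i) ⬝ᵥ z' := by
  refine ⟨fun h _ => h ▸ rfl, fun h => ?_⟩
  rw [← sub_eq_zero, ← dotProduct_self_eq_zero, b.dotProduct_self_eq_sum_sq]
  simp [dotProduct_sub, h]

theorem coe_ne_zero (i : ι) : ⇑(b i) ≠ 0 := by
  simpa using b.orthonormal.ne_zero i

end OrthonormalBasis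

section MatrixEigenvectors

variable {ι : Type*} [Fintype ι]

theorem Matrix.IsSymm.dotProduct_mulVec_of_mulVec_eq_smul {R : Type*} [CommSemiring R]
    {M : Matrix ι ι R} (hM : M.IsSymm) {v : ι → R} {μ : R} (hv : M *ᵥ v = μ • v) (z : ι → R) :
    v ⬝ᵥ (M *ᵥ z) = μ * (v ⬝ᵥ z) := by
  rw [dotProduct_mulVec, ← mulVec_transpose, hM.eq, hv, smul_dotProduct, smul_eq_mul]

theorem Matrix.IsSymm.dotProduct_inv_mulVec_of_mulVec_eq_smul {K : Type*} [Field K] [DecidableEq ι]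
    {M : Matrix ι ι K} (hM : M.IsSymm) (hdet : IsUnit M.det) {v : ι → K} {μ : K} (hμ : μ ≠ 0)
    (hv : M *ᵥ v = μ • v) (z : ι → K) :
    v ⬝ᵥ (M⁻¹ *ᵥ z) = μ⁻¹ * (v ⬝ᵥ z) := by
  rw [eq_inv_mul_iff_mul_eq₀ hμ, ← hM.dotProduct_mulVec_of_mulVec_eq_smul hv, mulVec_mulVec,
    mul_nonsing_inv _ hdet, one_mulVec]

theorem Matrix.PosSemidef.nonneg_of_mulVec_eq_smul {M : Matrix ι ι ℝ} (hM : M.PosSemidef)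
    {v : ι → ℝ} (hv0 : v ≠ 0) {μ : ℝ} (hv : M *ᵥ v = μ • v) : 0 ≤ μ := by
  have h := hM.dotProduct_mulVec_nonneg v
  rw [hv, dotProduct_smul, smul_eq_mul] at h
  exact nonneg_of_mul_nonneg_left h (dotProduct_star_self_pos_iff.2 hv0)

variable [DecidableEq ι] {A : Matrix ι ι ℝ} (hA : A.IsHermitian)

theorem Matrix.IsHermitian.one_le_eigenvalues_of_posSemidef_sub_one (h : (A - 1).PosSemidef)
    (i : ι) :
    1 ≤ hA.eigenvalues i :=
  sub_nonneg.1 <| h.nonneg_of_mulVec_eq_smul (hA.eigenvectorBasis.coe_ne_zero i) <| by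
    rw [sub_mulVec, one_mulVec, hA.mulVec_eigenvectorBasis, sub_smul, one_smul]

theorem Matrix.IsHermitian.eigenvalues_le_one_of_posSemidef_one_sub (h : (1 - A).PosSemidef)
    (i : ι) :
    hA.eigenvalues i ≤ 1 :=
  sub_nonneg.1 <| h.nonneg_of_mulVec_eq_smul (hA.eigenvectorBasis.coe_ne_zero i) <| by
    rw [sub_mulVec, one_mulVec, hA.mulVec_eigenvectorBasis, sub_smul, one_smul]

end MatrixEigenvectors

/-- For L symmetric positive definite with L ⪰ I or L ⪯ I and Lu ≠ u,
‖(L⁻¹−I)(I−L)u‖²/‖(I−L)u‖² ≥ ‖(L⁻¹−I)u‖²/‖u‖², equality iff u is an eigenvector of L. -/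
theorem stmt_6 (n : ℕ) (L : Matrix (Fin n) (Fin n) ℝ) (hL : L.PosDef)
    (hord : (L - 1).PosSemidef ∨ (1 - L).PosSemidef)
    (u : Fin n → ℝ) (hu : L *ᵥ u ≠ u) :
    (((L⁻¹ - 1) *ᵥ u) ⬝ᵥ ((L⁻¹ - 1) *ᵥ u)) / (u ⬝ᵥ u)
      ≤ (((L⁻¹ - 1) *ᵥ ((1 - L) *ᵥ u)) ⬝ᵥ ((L⁻¹ - 1) *ᵥ ((1 - L) *ᵥ u)))
          / (((1 - L) *ᵥ u) ⬝ᵥ ((1 - L) *ᵥ u))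
    ∧ ((((L⁻¹ - 1) *ᵥ ((1 - L) *ᵥ u)) ⬝ᵥ ((L⁻¹ - 1) *ᵥ ((1 - L) *ᵥ u)))
          / (((1 - L) *ᵥ u) ⬝ᵥ ((1 - L) *ᵥ u))
        = (((L⁻¹ - 1) *ᵥ u) ⬝ᵥ ((L⁻¹ - 1) *ᵥ u)) / (u ⬝ᵥ u)
      ↔ ∃ μ : ℝ, L *ᵥ u = μ • u) := by
  have hH := hL.isHermitian
  have hsymm : L.IsSymm := isHermitian_iff_isSymm.1 hH
  set b := hH.eigenvectorBasis
  set lam := hH.eigenvalues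
  have hpos : ∀ i, 0 < lam i := hL.eigenvalues_pos
  have hLb : ∀ i, L *ᵥ ⇑(b i) = lam i • ⇑(b i) := hH.mulVec_eigenvectorBasis
  have hside : (∀ i, 1 ≤ lam i) ∨ ∀ i, lam i ≤ 1 :=
    hord.imp hH.one_le_eigenvalues_of_posSemidef_sub_one hH.eigenvalues_le_one_of_posSemidef_one_sub
  have hdot : ∀ i z, ⇑(b i) ⬝ᵥ (L *ᵥ z) = lam i * (⇑(b i) ⬝ᵥ z) :=
    fun i => hsymm.dotProduct_mulVec_of_mulVec_eq_smul (hLb i)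
  have hdotA : ∀ i z, ⇑(b i) ⬝ᵥ ((L⁻¹ - 1) *ᵥ z) = ((lam i)⁻¹ - 1) * (⇑(b i) ⬝ᵥ z) := by
    intro i z
    rw [sub_mulVec, one_mulVec, dotProduct_sub, sub_one_mul,
      hsymm.dotProduct_inv_mulVec_of_mulVec_eq_smul (isUnit_iff_ne_zero.2 hL.det_pos.ne')
        (hpos i).ne' (hLb i)]
  have hdotB : ∀ i z, ⇑(b i) ⬝ᵥ ((1 - L) *ᵥ z) = (1 - lam i) * (⇑(b i) ⬝ᵥ z) := by
    intro i z
    rw [sub_mulVec, one_mulVec, dotProduct_sub, one_sub_mul, hdot]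
  have heig : ∀ μ : ℝ, L *ᵥ u = μ • u ↔ ∀ i, lam i * (⇑(b i) ⬝ᵥ u) = μ * (⇑(b i) ⬝ᵥ u) := by
    intro μ
    simp only [b.ext_dotProduct_iff, hdot, dotProduct_smul, smul_eq_mul]
  have hdenom : ((1 - L) *ᵥ u) ⬝ᵥ ((1 - L) *ᵥ u) ≠ 0 := by
    rwa [Ne, dotProduct_self_eq_zero, sub_mulVec, one_mulVec, sub_eq_zero, eq_comm]
  simp only [b.dotProduct_self_eq_sum_sq, hdotA, hdotB, heig] at hdenom ⊢
  exact sum_sq_div_sum_sq_le_and_eq_iff hpos hside hdenom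
end

section
/- Let A and B be symmetric positive definite n×n real matrices with B ⪰ A or B ⪯ A, and set W = B⁻¹(B − A). Then for any s ∈ ℝⁿ with Ws ≠ 0, ‖A^{-1/2}(B − A)s‖₂²/‖A^{1/2}s‖₂² ≤ ‖A^{-1/2}(B − A)Ws‖₂²/‖A^{1/2}Ws‖₂², with equality if and only if s is an eigenvector of W. -/
open Matrix Finset

/-!
Write `A = Pᵀ P` and `B = Pᵀ diag(d) P` (simultaneous diagonalization by congruence). In the
coordinates `y = P s` the matrix `W` acts as `diag(1 - d⁻¹)`, and the quotient becomes
`∑ (dᵢ - 1)² yᵢ² / ∑ yᵢ²`. Since `B - A` is semidefinite of one sign, either all `dᵢ ≥ 1` or all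
`dᵢ ≤ 1`, and on either side `(d - 1)²` and `(1 - d⁻¹)²` are strictly similarly ordered functions
of `d`. The inequality is then Chebyshev's sum inequality with weights `yᵢ²`, via the identity
`2 (∑ p f g ∑ p - ∑ p f ∑ p g) = ∑ᵢ ∑ⱼ pᵢ pⱼ (fᵢ - fⱼ) (gᵢ - gⱼ)`; equality forces `1 - d⁻¹` to be
constant on the support of `y`, i.e. `s` to be an eigenvector of `W`.
-/

section Chebyshev

variable {ι : Type*} [Fintype ι]

theorem two_mul_sum_mul_sum_sub_eq_sum_sum (p f g : ι → ℝ) :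
    2 * ((∑ i, p i * (f i * g i)) * ∑ i, p i - (∑ i, p i * f i) * ∑ i, p i * g i) =
      ∑ i, ∑ j, p i * p j * ((f i - f j) * (g i - g j)) := by
  set U : ι → ι → ℝ := fun i j => p i * (f i * g i) * p j - p i * f i * (p j * g j)
  have hU : (∑ i, p i * (f i * g i)) * ∑ i, p i - (∑ i, p i * f i) * ∑ i, p i * g i =
      ∑ i, ∑ j, U i j := by
    simp only [U, sum_mul_sum, ← sum_sub_distrib]
  calc _ = ∑ i, ∑ j, U i j + ∑ i, ∑ j, U j i := by
        rw [hU, two_mul, sum_comm (f := fun j i => U i j)]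
    _ = _ := by
      rw [← sum_add_distrib]
      refine sum_congr rfl fun i _ => ?_
      rw [← sum_add_distrib]
      exact sum_congr rfl fun j _ => by ring

noncomputable def diagRayleigh (m y : ι → ℝ) : ℝ := (m * y) ⬝ᵥ (m * y) / y ⬝ᵥ y

lemma dotProduct_self_pos {y : ι → ℝ} (hy : y ≠ 0) : 0 < y ⬝ᵥ y :=
  lt_of_le_of_ne (sum_nonneg fun i _ => mul_self_nonneg (y i))
    (Ne.symm (mt dotProduct_self_eq_zero.mp hy))

theorem two_mul_dotProduct_cross_sub_eq_sum_sum (m w y : ι → ℝ) :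
    2 * ((m * (w * y)) ⬝ᵥ (m * (w * y)) * y ⬝ᵥ y - (m * y) ⬝ᵥ (m * y) * (w * y) ⬝ᵥ (w * y)) =
      ∑ i, ∑ j, y i ^ 2 * y j ^ 2 * ((m i ^ 2 - m j ^ 2) * (w i ^ 2 - w j ^ 2)) := by
  have e : ∀ a : ι → ℝ, (a * y) ⬝ᵥ (a * y) = ∑ i, y i ^ 2 * a i ^ 2 :=
    fun a => sum_congr rfl fun i _ => by simp only [Pi.mul_apply]; ring
  have e₁ : y ⬝ᵥ y = ∑ i, y i ^ 2 := sum_congr rfl fun i _ => (sq (y i)).symm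
  rw [← mul_assoc, e, e, e, e₁]
  simp only [Pi.mul_apply, mul_pow]
  exact two_mul_sum_mul_sum_sub_eq_sum_sum (y · ^ 2) (m · ^ 2) (w · ^ 2)

theorem exists_mul_eq_smul_iff {w y : ι → ℝ} :
    (∃ μ : ℝ, w * y = μ • y) ↔ ∀ i j, y i ≠ 0 → y j ≠ 0 → w i = w j := by
  constructor
  · rintro ⟨μ, hμ⟩ i j hi hj
    have h : ∀ k, y k ≠ 0 → w k = μ := fun k hk =>
      mul_right_cancel₀ hk (by simpa using congrFun hμ k)
    rw [h i hi, h j hj]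
  · intro h
    by_cases hy : y = 0
    · exact ⟨0, by simp [hy]⟩
    obtain ⟨i₀, hi₀⟩ := Function.ne_iff.mp hy
    refine ⟨w i₀, funext fun i => ?_⟩
    by_cases hi : y i = 0
    · simp [hi]
    · simp [h i i₀ hi hi₀]

section Monovary

variable {m w : ι → ℝ}
  (hmw : ∀ i j, w i ≠ w j → 0 < (m i ^ 2 - m j ^ 2) * (w i ^ 2 - w j ^ 2))
include hmw

omit [Fintype ι] in
lemma sq_sub_mul_sq_sub_nonneg (i j : ι) : 0 ≤ (m i ^ 2 - m j ^ 2) * (w i ^ 2 - w j ^ 2) := by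
  by_cases h : w i = w j
  · simp [h]
  · exact (hmw i j h).le

lemma sum_sum_sq_mul_nonneg (y : ι → ℝ) :
    0 ≤ ∑ i, ∑ j, y i ^ 2 * y j ^ 2 * ((m i ^ 2 - m j ^ 2) * (w i ^ 2 - w j ^ 2)) :=
  sum_nonneg fun i _ => sum_nonneg fun j _ =>
    mul_nonneg (by positivity) (sq_sub_mul_sq_sub_nonneg hmw i j)

lemma sum_sum_sq_mul_eq_zero_iff (y : ι → ℝ) :
    ∑ i, ∑ j, y i ^ 2 * y j ^ 2 * ((m i ^ 2 - m j ^ 2) * (w i ^ 2 - w j ^ 2)) = 0 ↔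
      ∀ i j, y i ≠ 0 → y j ≠ 0 → w i = w j := by
  have hterm : ∀ i j, 0 ≤ y i ^ 2 * y j ^ 2 * ((m i ^ 2 - m j ^ 2) * (w i ^ 2 - w j ^ 2)) :=
    fun i j => mul_nonneg (by positivity) (sq_sub_mul_sq_sub_nonneg hmw i j)
  simp only [sum_eq_zero_iff_of_nonneg (fun i _ => sum_nonneg fun j _ => hterm i j),
    sum_eq_zero_iff_of_nonneg (fun j _ => hterm _ j), mem_univ, true_implies, mul_eq_zero,
    pow_eq_zero_iff two_ne_zero]
  refine forall₂_congr fun i j => ⟨fun h hi hj => ?_, fun h => ?_⟩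
  · by_contra hne
    exact (hmw i j hne).ne' (mul_eq_zero.mpr (h.resolve_left (not_or.mpr ⟨hi, hj⟩)))
  · by_cases hi : y i = 0
    · exact Or.inl (Or.inl hi)
    by_cases hj : y j = 0
    · exact Or.inl (Or.inr hj)
    exact Or.inr (Or.inr (by rw [h hi hj, sub_self]))

variable {y : ι → ℝ}

theorem diagRayleigh_le_diagRayleigh_mul (hwy : w * y ≠ 0) :
    diagRayleigh m y ≤ diagRayleigh m (w * y) := by
  have hy : y ≠ 0 := fun h => hwy (by simp [h])
  rw [diagRayleigh, diagRayleigh,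
    div_le_div_iff₀ (dotProduct_self_pos hy) (dotProduct_self_pos hwy)]
  have := two_mul_dotProduct_cross_sub_eq_sum_sum m w y
  linarith [sum_sum_sq_mul_nonneg hmw y]

theorem diagRayleigh_eq_diagRayleigh_mul_iff (hwy : w * y ≠ 0) :
    diagRayleigh m y = diagRayleigh m (w * y) ↔ ∃ μ : ℝ, w * y = μ • y := by
  have hy : y ≠ 0 := fun h => hwy (by simp [h])
  rw [diagRayleigh, diagRayleigh, div_eq_div_iff (dotProduct_self_pos hy).ne'
    (dotProduct_self_pos hwy).ne', exists_mul_eq_smul_iff, ← sum_sum_sq_mul_eq_zero_iff hmw,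
    ← two_mul_dotProduct_cross_sub_eq_sum_sum]
  constructor <;> intro h <;> linarith

end Monovary

end Chebyshev

lemma sub_one_sq_sub_mul_one_sub_inv_sq_sub_pos {a b : ℝ} (ha : 0 < a) (hb : 0 < b)
    (hab : a ≠ b) (hside : (1 ≤ a ∧ 1 ≤ b) ∨ (a ≤ 1 ∧ b ≤ 1)) :
    0 < ((a - 1) ^ 2 - (b - 1) ^ 2) * ((1 - a⁻¹) ^ 2 - (1 - b⁻¹) ^ 2) := by
  have hid : ((a - 1) ^ 2 - (b - 1) ^ 2) * ((1 - a⁻¹) ^ 2 - (1 - b⁻¹) ^ 2) =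
      (a - b) ^ 2 * ((a + b - 2) * (b * (a - 1) + a * (b - 1))) / (a * b) ^ 2 := by
    field_simp
    ring
  have hsq : 0 < (a - b) ^ 2 := by positivity [sub_ne_zero.mpr hab]
  rw [hid]
  refine div_pos (mul_pos hsq ?_) (by positivity)
  rcases hside with ⟨ha1, hb1⟩ | ⟨ha1, hb1⟩ <;> rcases hab.lt_or_gt with h | h <;> nlinarith

namespace Matrix

variable {n : Type*} [Fintype n] [DecidableEq n]

lemma IsHermitian.cfc_real_eq {A : Matrix n n ℝ} (hA : A.IsHermitian) (f : ℝ → ℝ) :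
    cfc f A = (hA.eigenvectorUnitary : Matrix n n ℝ) * diagonal (f ∘ hA.eigenvalues) *
      star (hA.eigenvectorUnitary : Matrix n n ℝ) := by
  rw [hA.cfc_eq, IsHermitian.cfc, Unitary.conjStarAlgAut_apply, RCLike.ofReal_real_eq_id]
  rfl

lemma transpose_cfc {A : Matrix n n ℝ} (f : ℝ → ℝ) : (cfc f A)ᵀ = cfc f A := by
  rw [← conjTranspose_eq_transpose_of_trivial]
  exact (cfc_predicate f A).star_eq

lemma PosSemidef.cfc_sqrt_mul_self {A : Matrix n n ℝ} (hA : A.PosSemidef) :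
    cfc Real.sqrt A * cfc Real.sqrt A = A := by
  have hA' : IsSelfAdjoint A := hA.1
  rw [← cfc_mul Real.sqrt Real.sqrt A]
  conv_rhs => rw [← cfc_id' ℝ A hA']
  refine cfc_congr fun x hx => ?_
  obtain ⟨i, rfl⟩ := hA.1.spectrum_real_eq_range_eigenvalues ▸ hx
  exact Real.mul_self_sqrt (hA.eigenvalues_nonneg i)

lemma PosDef.isUnit_cfc_sqrt {A : Matrix n n ℝ} (hA : A.PosDef) : IsUnit (cfc Real.sqrt A) := by
  have h := (isUnit_iff_isUnit_det A).mp hA.isUnit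
  rw [← hA.posSemidef.cfc_sqrt_mul_self, det_mul] at h
  exact (isUnit_iff_isUnit_det _).mpr (isUnit_of_mul_isUnit_left h)

theorem PosDef.exists_simultaneous_diagonalization {A B : Matrix n n ℝ} (hA : A.PosDef)
    (hB : B.IsHermitian) :
    ∃ (P : Matrix n n ℝ) (d : n → ℝ), IsUnit P ∧ A = Pᵀ * P ∧ B = Pᵀ * diagonal d * P := by
  set R := cfc Real.sqrt A
  have hRdet : IsUnit R.det := (isUnit_iff_isUnit_det R).mp hA.isUnit_cfc_sqrt
  have hRT : Rᵀ = R := transpose_cfc _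
  have hBT : Bᵀ = B := by rw [← conjTranspose_eq_transpose_of_trivial]; exact hB.eq
  have hC : (R⁻¹ * B * R⁻¹).IsHermitian := by
    simp only [IsHermitian, conjTranspose_eq_transpose_of_trivial, transpose_mul,
      transpose_nonsing_inv, hRT, hBT, mul_assoc]
  set V : Matrix n n ℝ := ↑hC.eigenvectorUnitary
  have hVV : V * star V = 1 := Unitary.mul_star_self_of_mem hC.eigenvectorUnitary.2
  have hVT : (star V)ᵀ = V := by
    rw [← conjTranspose_eq_transpose_of_trivial, ← star_eq_conjTranspose, star_star]
  have hspec : V * diagonal hC.eigenvalues * star V = R⁻¹ * B * R⁻¹ :=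
    (hC.cfc_real_eq id).symm.trans (cfc_id ℝ _ hC.isSelfAdjoint)
  refine ⟨star V * R, hC.eigenvalues, Unitary.isUnit_coe.star.mul hA.isUnit_cfc_sqrt, ?_, ?_⟩
  · rw [transpose_mul, hRT, hVT, mul_assoc, ← mul_assoc V, hVV, one_mul,
      hA.posSemidef.cfc_sqrt_mul_self]
  · calc B = R * (R⁻¹ * B * R⁻¹) * R := by
          simp only [mul_assoc, nonsing_inv_mul R hRdet, mul_one, ← mul_assoc R,
            mul_nonsing_inv R hRdet, one_mul]
      _ = R * (V * diagonal hC.eigenvalues * star V) * R := by rw [hspec]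
      _ = (star V * R)ᵀ * diagonal hC.eigenvalues * (star V * R) := by
          rw [transpose_mul, hRT, hVT]; simp only [mul_assoc]

omit [DecidableEq n] in
lemma dotProduct_mulVec_self_eq_of_transpose_mul_self_eq {M N : Matrix n n ℝ}
    (h : Mᵀ * M = Nᵀ * N) (x : n → ℝ) :
    (M *ᵥ x) ⬝ᵥ (M *ᵥ x) = (N *ᵥ x) ⬝ᵥ (N *ᵥ x) := by
  have key : ∀ K : Matrix n n ℝ, (K *ᵥ x) ⬝ᵥ (K *ᵥ x) = x ⬝ᵥ ((Kᵀ * K) *ᵥ x) := fun K => by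
    rw [← mulVec_mulVec, dotProduct_mulVec x Kᵀ, vecMul_transpose]
  rw [key, h, key]

lemma IsUnit.posSemidef_transpose_mul_diagonal_mul_iff {P : Matrix n n ℝ} (hP : IsUnit P)
    {d : n → ℝ} : (Pᵀ * diagonal d * P).PosSemidef ↔ 0 ≤ d := by
  rw [← conjTranspose_eq_transpose_of_trivial, ← star_eq_conjTranspose,
    hP.posSemidef_star_left_conjugate_iff, posSemidef_diagonal_iff, Pi.le_def]
  rfl

lemma IsUnit.posDef_transpose_mul_diagonal_mul_iff {P : Matrix n n ℝ} (hP : IsUnit P)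
    {d : n → ℝ} : (Pᵀ * diagonal d * P).PosDef ↔ ∀ i, 0 < d i := by
  rw [← conjTranspose_eq_transpose_of_trivial, ← star_eq_conjTranspose,
    IsUnit.posDef_star_left_conjugate_iff hP, posDef_diagonal_iff]

section Congruence

variable {A B P : Matrix n n ℝ} {d : n → ℝ} (hP : IsUnit P) (hAP : A = Pᵀ * P)
  (hBP : B = Pᵀ * diagonal d * P)
include hAP hBP

lemma sub_eq_transpose_mul_diagonal_sub_one_mul : B - A = Pᵀ * diagonal (d - 1) * P := by
  have h : diagonal (d - 1) = diagonal d - 1 := by rw [← diagonal_one', diagonal_sub]; rfl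
  rw [hAP, hBP, h, mul_sub, sub_mul, mul_one]

lemma sub_eq_transpose_mul_diagonal_one_sub_mul : A - B = Pᵀ * diagonal (1 - d) * P := by
  have h : diagonal (1 - d) = 1 - diagonal d := by rw [← diagonal_one', diagonal_sub]; rfl
  rw [hAP, hBP, h, mul_sub, sub_mul, mul_one]

include hP

lemma one_le_of_posSemidef_sub (h : (B - A).PosSemidef) (i : n) : 1 ≤ d i := by
  rw [sub_eq_transpose_mul_diagonal_sub_one_mul hAP hBP,
    hP.posSemidef_transpose_mul_diagonal_mul_iff] at h
  simpa using h i

lemma le_one_of_posSemidef_sub (h : (A - B).PosSemidef) (i : n) : d i ≤ 1 := by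
  rw [sub_eq_transpose_mul_diagonal_one_sub_mul hAP hBP,
    hP.posSemidef_transpose_mul_diagonal_mul_iff] at h
  simpa using h i

lemma mul_inv_mul_sub_eq (hd : ∀ i, d i ≠ 0) :
    P * (B⁻¹ * (B - A)) = diagonal (1 - d⁻¹) * P := by
  have hPdet : IsUnit P.det := (isUnit_iff_isUnit_det P).mp hP
  have hB : IsUnit B.det := by
    rw [hBP, det_mul, det_mul, det_transpose, det_diagonal]
    exact (hPdet.mul (Finset.prod_ne_zero_iff.mpr fun i _ => hd i).isUnit).mul hPdet
  have hsub : B - A = B * (P⁻¹ * (diagonal (1 - d⁻¹) * P)) := by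
    rw [sub_eq_transpose_mul_diagonal_sub_one_mul hAP hBP, hBP]
    simp only [mul_assoc]
    rw [mul_nonsing_inv_cancel_left P _ hPdet, ← mul_assoc (diagonal d), diagonal_mul_diagonal]
    congr 3
    funext i
    simp [mul_sub, mul_inv_cancel₀ (hd i)]
  rw [hsub, nonsing_inv_mul_cancel_left B _ hB, mul_nonsing_inv_cancel_left P _ hPdet]

lemma div_eq_diagRayleigh {R : Matrix n n ℝ} (hRT : Rᵀ = R) (hRR : R * R = A) (v : n → ℝ) :
    (R⁻¹ *ᵥ ((B - A) *ᵥ v)) ⬝ᵥ (R⁻¹ *ᵥ ((B - A) *ᵥ v)) / (R *ᵥ v) ⬝ᵥ (R *ᵥ v) =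
      diagRayleigh (d - 1) (P *ᵥ v) := by
  have hPdet : IsUnit P.det := (isUnit_iff_isUnit_det P).mp hP
  have hPTdet : IsUnit Pᵀ.det := by rwa [det_transpose]
  -- `R⁻¹ * Pᵀ` is orthogonal because `R * R = A = Pᵀ * P`.
  have horth : (R⁻¹ * Pᵀ)ᵀ * (R⁻¹ * Pᵀ) = 1ᵀ * 1 := by
    rw [transpose_mul, transpose_transpose, transpose_nonsing_inv, hRT, mul_assoc,
      ← mul_assoc R⁻¹, ← mul_inv_rev, hRR, hAP, mul_inv_rev, mul_assoc,
      nonsing_inv_mul _ hPTdet, mul_one, mul_nonsing_inv _ hPdet, transpose_one, mul_one]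
  have hsub : (B - A) *ᵥ v = Pᵀ *ᵥ ((d - 1) * (P *ᵥ v)) := by
    rw [sub_eq_transpose_mul_diagonal_sub_one_mul hAP hBP, ← mulVec_mulVec, ← mulVec_mulVec]
    exact congrArg (Pᵀ *ᵥ ·) (funext fun i => mulVec_diagonal _ _ i)
  rw [diagRayleigh, hsub, mulVec_mulVec,
    dotProduct_mulVec_self_eq_of_transpose_mul_self_eq horth, one_mulVec,
    dotProduct_mulVec_self_eq_of_transpose_mul_self_eq (N := P) (by rw [hRT, hRR, hAP])]

end Congruence

end Matrix

/-- Image operator improvement for BFGS/DFP with W = B⁻¹(B − A), assuming A, B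
symmetric positive definite with B ⪰ A or B ⪯ A. -/
theorem stmt_7 (n : ℕ) (A B : Matrix (Fin n) (Fin n) ℝ)
    (hA : A.PosDef) (hB : B.PosDef)
    (hord : (B - A).PosSemidef ∨ (A - B).PosSemidef)
    (W : Matrix (Fin n) (Fin n) ℝ) (hW : W = B⁻¹ * (B - A))
    (Asqrt : Matrix (Fin n) (Fin n) ℝ) (hAsqrt : Asqrt = (hA.posSemidef.1.eigenvectorUnitary : Matrix (Fin n) (Fin n) ℝ) *
      diagonal (Real.sqrt ∘ hA.posSemidef.1.eigenvalues) *
      (star hA.posSemidef.1.eigenvectorUnitary : Matrix (Fin n) (Fin n) ℝ))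
    (s : Fin n → ℝ) (hs : W *ᵥ s ≠ 0)
    (q : (Fin n → ℝ) → ℝ)
    (hq : q = fun v => ((Asqrt⁻¹ *ᵥ ((B - A) *ᵥ v)) ⬝ᵥ (Asqrt⁻¹ *ᵥ ((B - A) *ᵥ v)))
        / ((Asqrt *ᵥ v) ⬝ᵥ (Asqrt *ᵥ v))) :
    q s ≤ q (W *ᵥ s) ∧ (q s = q (W *ᵥ s) ↔ ∃ μ : ℝ, W *ᵥ s = μ • s) := by
  obtain rfl : Asqrt = cfc Real.sqrt A := hAsqrt.trans (hA.posSemidef.1.cfc_real_eq _).symm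
  obtain ⟨P, d, hP, hAP, hBP⟩ := hA.exists_simultaneous_diagonalization hB.isHermitian
  have hd : ∀ i, 0 < d i := hP.posDef_transpose_mul_diagonal_mul_iff.mp (hBP ▸ hB)
  have hqP : ∀ v, q v = diagRayleigh (d - 1) (P *ᵥ v) := fun v => by
    rw [hq]
    exact div_eq_diagRayleigh hP hAP hBP (transpose_cfc _) hA.posSemidef.cfc_sqrt_mul_self v
  have hPW : ∀ v, P *ᵥ (W *ᵥ v) = (1 - d⁻¹) * (P *ᵥ v) := fun v => by
    rw [hW, mulVec_mulVec, mul_inv_mul_sub_eq hP hAP hBP fun i => (hd i).ne', ← mulVec_mulVec]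
    exact funext fun i => mulVec_diagonal _ _ i
  have hmw : ∀ i j, (1 - d⁻¹) i ≠ (1 - d⁻¹) j →
      0 < ((d - 1) i ^ 2 - (d - 1) j ^ 2) * ((1 - d⁻¹) i ^ 2 - (1 - d⁻¹) j ^ 2) := by
    refine fun i j hij => sub_one_sq_sub_mul_one_sub_inv_sq_sub_pos (hd i) (hd j)
      (fun h => hij (by simp [h])) ?_
    rcases hord with h | h
    · exact .inl ⟨one_le_of_posSemidef_sub hP hAP hBP h i, one_le_of_posSemidef_sub hP hAP hBP h j⟩
    · exact .inr ⟨le_one_of_posSemidef_sub hP hAP hBP h i, le_one_of_posSemidef_sub hP hAP hBP h j⟩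
  have hPinj := mulVec_injective_of_isUnit hP
  have hWs : (1 - d⁻¹) * (P *ᵥ s) ≠ 0 := by
    rw [← hPW, ← mulVec_zero P]
    exact hPinj.ne hs
  rw [hqP, hqP, hPW]
  refine ⟨diagRayleigh_le_diagRayleigh_mul hmw hWs,
    (diagRayleigh_eq_diagRayleigh_mul_iff hmw hWs).trans (exists_congr fun μ => ?_)⟩
  rw [← hPW, ← mulVec_smul, hPinj.eq_iff]
end

section
/- Let A, B be n×n real matrices and s ∈ ℝⁿ nonzero, with y = As. Let B₊ = B + (y − Bs)sᵀ/(sᵀs) be the Broyden good update. Then ‖B₊ − A‖_F² = ‖B − A‖_F² − ‖(B − A)s‖₂²/‖s‖₂² (exact equality). -/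
/-!
Write `E = B - A` and `e = E s`. Since `y = A s`, the update error `B₊ - A = E - e sᵀ / (sᵀ s)` is a
rank-one correction of `E`. Expanding `‖E - c e sᵀ‖_F²` gives the cross term `-2 c ‖e‖²`, because
`tr (Eᵀ e sᵀ) = eᵀ E s = ‖e‖²`, and the square term `c² ‖e‖² ‖s‖²`; with `c = 1 / ‖s‖²` they add
up to `-‖e‖² / ‖s‖²`.
-/

open Matrix

namespace Matrix

variable {m n R : Type*} [Fintype n] [CommRing R]

theorem add_smul_vecMulVec_sub_mulVec_sub (A B : Matrix m n R) (c : R) (s : n → R) :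
    B + c • vecMulVec (A *ᵥ s - B *ᵥ s) s - A = (B - A) - c • vecMulVec ((B - A) *ᵥ s) s := by
  rw [← sub_mulVec, ← neg_sub B A, neg_mulVec, neg_vecMulVec, smul_neg]
  abel

variable [Fintype m]

theorem trace_transpose_mul_vecMulVec (M : Matrix m n R) (u : m → R) (v : n → R) :
    trace (Mᵀ * vecMulVec u v) = u ⬝ᵥ (M *ᵥ v) := by
  rw [mul_vecMulVec, trace_vecMulVec, mulVec_transpose, dotProduct_mulVec]

theorem trace_transpose_vecMulVec_mul_self (u : m → R) (v : n → R) :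
    trace ((vecMulVec u v)ᵀ * vecMulVec u v) = (u ⬝ᵥ u) * (v ⬝ᵥ v) := by
  rw [trace_transpose_mul_vecMulVec, vecMulVec_mulVec, dotProduct_smul, op_smul_eq_smul,
    smul_eq_mul, mul_comm]

theorem trace_transpose_mul_self_sub_smul_vecMulVec (E : Matrix m n R) (c : R) (u : m → R)
    (v : n → R) :
    trace ((E - c • vecMulVec u v)ᵀ * (E - c • vecMulVec u v))
      = trace (Eᵀ * E) - 2 * c * (u ⬝ᵥ (E *ᵥ v)) + c ^ 2 * ((u ⬝ᵥ u) * (v ⬝ᵥ v)) := by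
  have h_symm : trace ((vecMulVec u v)ᵀ * E) = trace (Eᵀ * vecMulVec u v) := by
    rw [← trace_transpose, transpose_mul, transpose_transpose]
  rw [transpose_sub, transpose_smul, Matrix.sub_mul, Matrix.mul_sub, Matrix.mul_sub,
    Matrix.smul_mul, Matrix.mul_smul, Matrix.smul_mul, Matrix.mul_smul, smul_smul, trace_sub,
    trace_sub, trace_sub, trace_smul, trace_smul, trace_smul, h_symm, trace_transpose_mul_vecMulVec,
    trace_transpose_vecMulVec_mul_self]
  simp only [smul_eq_mul]
  ring

end Matrix

theorem stmt_8_general (n : ℕ) (A B : Matrix (Fin n) (Fin n) ℝ)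
    (s : Fin n → ℝ) (y : Fin n → ℝ) (hy : y = A *ᵥ s)
    (Bp : Matrix (Fin n) (Fin n) ℝ)
    (hBp : Bp = B + (s ⬝ᵥ s)⁻¹ • vecMulVec (y - B *ᵥ s) s) :
    trace ((Bp - A)ᵀ * (Bp - A))
      = trace ((B - A)ᵀ * (B - A))
        - (((B - A) *ᵥ s) ⬝ᵥ ((B - A) *ᵥ s)) / (s ⬝ᵥ s) := by
  subst hBp hy
  rw [add_smul_vecMulVec_sub_mulVec_sub, trace_transpose_mul_self_sub_smul_vecMulVec]
  -- also true when `s ⬝ᵥ s = 0`, as `0⁻¹ = 0`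
  have h_inv : (s ⬝ᵥ s)⁻¹ ^ 2 * (s ⬝ᵥ s) = (s ⬝ᵥ s)⁻¹ := by
    rw [sq, mul_right_comm]
    simpa using mul_inv_mul_cancel (s ⬝ᵥ s)⁻¹
  rw [div_eq_mul_inv]
  linear_combination (((B - A) *ᵥ s) ⬝ᵥ ((B - A) *ᵥ s)) * h_inv

/-- Exact error reduction identity for the Broyden good update. -/
theorem stmt_8 (n : ℕ) (A B : Matrix (Fin n) (Fin n) ℝ)
    (s : Fin n → ℝ) (hs : s ≠ 0) (y : Fin n → ℝ) (hy : y = A *ᵥ s)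
    (Bp : Matrix (Fin n) (Fin n) ℝ)
    (hBp : Bp = B + (s ⬝ᵥ s)⁻¹ • vecMulVec (y - B *ᵥ s) s) :
    trace ((Bp - A)ᵀ * (Bp - A))
      = trace ((B - A)ᵀ * (B - A))
        - (((B - A) *ᵥ s) ⬝ᵥ ((B - A) *ᵥ s)) / (s ⬝ᵥ s) :=
  stmt_8_general n A B s y hy Bp hBp
end

section
/- Let M be a symmetric positive definite n×n real matrix and A, B n×n real matrices. Let s̃ be the M⁻²-orthogonal projection of s ∈ ℝⁿ onto the M⁻²-orthogonal complement of ker(B − A), and assume s̃ ≠ 0. Then ‖M(B − A)s‖₂²/‖M⁻¹s‖₂² ≤ ‖M(B − A)s̃‖₂²/‖M⁻¹s̃‖₂², with equality if and only if s lies in the M⁻²-orthogonal complement of ker(B − A). -/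
/-!
Transporting by `z ↦ M⁻¹ z` turns the `M⁻²`-geometry into Euclidean geometry:
`⟨a, b⟩_{M⁻²} = ⟪M⁻¹ a, M⁻¹ b⟫`. So `M⁻¹ s̃` is the genuine orthogonal projection of `M⁻¹ s`
onto `Kᗮ`, where `K = M⁻¹ ker(B - A)`, and `s - s̃ ∈ ker(B - A)`. Hence both quotients have the
same numerator, while by Pythagoras `‖M⁻¹ s‖² = ‖M⁻¹ s̃‖² + ‖M⁻¹ (s - s̃)‖²`; the last term
vanishes exactly when `s = s̃`, i.e. when `s` already lies in the complement.
-/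

open Matrix
open scoped RealInnerProductSpace

theorem div_add_le_div_and_eq_iff {α : Type*} [Field α] [LinearOrder α] [IsStrictOrderedRing α]
    {a b c : α} (ha : 0 < a) (hb : 0 < b) (hc : 0 ≤ c) :
    a / (b + c) ≤ a / b ∧ (a / (b + c) = a / b ↔ c = 0) := by
  refine ⟨div_le_div_of_nonneg_left ha.le hb (le_add_of_nonneg_right hc), ?_⟩
  rw [div_eq_div_iff (by positivity) hb.ne', mul_right_inj' ha.ne', eq_comm, add_eq_left]

namespace Submodule

variable {E : Type*} [NormedAddCommGroup E] [InnerProductSpace ℝ E]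

theorem mem_orthogonal_map_iff {V : Type*} [AddCommGroup V] [Module ℝ V] (f : V →ₗ[ℝ] E)
    (S : Submodule ℝ V) (z : V) : f z ∈ (S.map f)ᗮ ↔ ∀ x ∈ S, ⟪f z, f x⟫ = 0 := by
  rw [mem_orthogonal']
  exact ⟨fun h x hx => h _ (mem_map_of_mem hx), by rintro h _ ⟨x, hx, rfl⟩; exact h x hx⟩

theorem sub_mem_of_forall_norm_sub_le {K : Submodule ℝ E} [K.HasOrthogonalProjection] {u p : E}
    (hp : p ∈ Kᗮ) (hmin : ∀ w ∈ Kᗮ, ‖u - p‖ ≤ ‖u - w‖) : u - p ∈ K := by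
  have hinf : ‖u - p‖ = ⨅ w : Kᗮ, ‖u - w‖ :=
    le_antisymm (le_ciInf fun w => hmin w w.2)
      (ciInf_le (f := fun w : Kᗮ => ‖u - w‖) ⟨0, Set.forall_mem_range.2 fun _ => norm_nonneg _⟩
        ⟨p, hp⟩)
  rw [← K.orthogonal_orthogonal, mem_orthogonal']
  exact (Kᗮ.norm_eq_iInf_iff_real_inner_eq_zero hp).1 hinf

theorem sub_mem_of_forall_norm_map_sub_le {V : Type*} [AddCommGroup V] [Module ℝ V]
    [FiniteDimensional ℝ E] (φ : V ≃ₗ[ℝ] E) {S : Submodule ℝ V} {s p : V}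
    (hp : φ p ∈ (S.map (φ : V →ₗ[ℝ] E))ᗮ)
    (hmin : ∀ t, φ t ∈ (S.map (φ : V →ₗ[ℝ] E))ᗮ → ‖φ (s - p)‖ ≤ ‖φ (s - t)‖) :
    s - p ∈ S := by
  have h := sub_mem_of_forall_norm_sub_le hp fun w hw => by
    simpa using hmin (φ.symm w) (by simpa using hw)
  simpa [← map_sub, mem_map_equiv] using h

theorem norm_sq_eq_add_norm_sub_sq {K : Submodule ℝ E} {u p : E} (hp : p ∈ Kᗮ) (hup : u - p ∈ K) :
    ‖u‖ ^ 2 = ‖p‖ ^ 2 + ‖u - p‖ ^ 2 := by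
  have h := norm_add_sq_eq_norm_sq_add_norm_sq_real (inner_left_of_mem_orthogonal hup hp)
  rw [add_sub_cancel] at h
  simpa only [sq] using h

theorem mem_orthogonal_iff_eq_of_sub_mem {K : Submodule ℝ E} {u p : E} (hp : p ∈ Kᗮ)
    (hup : u - p ∈ K) : u ∈ Kᗮ ↔ u = p := by
  rw [← Kᗮ.sub_mem_iff_left hp, ← sub_eq_zero]
  exact ⟨disjoint_def.1 K.orthogonal_disjoint _ hup, fun h => h ▸ Kᗮ.zero_mem⟩

end Submodule

namespace Matrix

variable {n : Type*} [Fintype n] [DecidableEq n]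

noncomputable def mulVecEuclideanEquiv (C : Matrix n n ℝ) (hC : IsUnit C.det) :
    (n → ℝ) ≃ₗ[ℝ] EuclideanSpace ℝ n :=
  (C.toLinearEquiv (Pi.basisFun ℝ n) hC).trans (WithLp.linearEquiv 2 ℝ (n → ℝ)).symm

@[simp]
theorem mulVecEuclideanEquiv_apply (C : Matrix n n ℝ) (hC : IsUnit C.det) (z : n → ℝ) :
    C.mulVecEuclideanEquiv hC z = WithLp.toLp 2 (C *ᵥ z) := by
  simp [mulVecEuclideanEquiv, Matrix.toLinearEquiv, toLin_eq_toLin']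

theorem inner_mulVecEuclideanEquiv (C : Matrix n n ℝ) (hC : IsUnit C.det) (a b : n → ℝ) :
    ⟪C.mulVecEuclideanEquiv hC a, C.mulVecEuclideanEquiv hC b⟫ = a ⬝ᵥ ((Cᵀ * C) *ᵥ b) := by
  rw [mulVecEuclideanEquiv_apply, mulVecEuclideanEquiv_apply, EuclideanSpace.inner_toLp_toLp,
    star_trivial, ← mulVec_mulVec, dotProduct_mulVec a, vecMul_transpose, dotProduct_comm]

theorem norm_mulVecEuclideanEquiv_sq (C : Matrix n n ℝ) (hC : IsUnit C.det) (z : n → ℝ) :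
    ‖C.mulVecEuclideanEquiv hC z‖ ^ 2 = (C *ᵥ z) ⬝ᵥ (C *ᵥ z) := by
  rw [← real_inner_self_eq_norm_sq, mulVecEuclideanEquiv_apply, EuclideanSpace.inner_toLp_toLp,
    star_trivial]

end Matrix

/-- Projection operator improvement for the generalized PSB family.
`inT z` says z lies in the M⁻²-orthogonal complement of ker(B − A); s̃ is the
M⁻²-orthogonal projection of s onto that complement (membership plus minimality). -/
theorem stmt_10 (n : ℕ) (M A B : Matrix (Fin n) (Fin n) ℝ) (hM : M.PosDef)
    (G : Matrix (Fin n) (Fin n) ℝ) (hG : G = M⁻¹ * M⁻¹)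
    (s st : Fin n → ℝ)
    (inT : (Fin n → ℝ) → Prop)
    (hinT : inT = fun z => ∀ x : Fin n → ℝ, (B - A) *ᵥ x = 0 → z ⬝ᵥ (G *ᵥ x) = 0)
    (hmem : inT st)
    (hmin : ∀ t : Fin n → ℝ, inT t →
      (s - st) ⬝ᵥ (G *ᵥ (s - st)) ≤ (s - t) ⬝ᵥ (G *ᵥ (s - t)))
    (hst : st ≠ 0) :
    ((M *ᵥ ((B - A) *ᵥ s)) ⬝ᵥ (M *ᵥ ((B - A) *ᵥ s))) / ((M⁻¹ *ᵥ s) ⬝ᵥ (M⁻¹ *ᵥ s))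
      ≤ ((M *ᵥ ((B - A) *ᵥ st)) ⬝ᵥ (M *ᵥ ((B - A) *ᵥ st))) / ((M⁻¹ *ᵥ st) ⬝ᵥ (M⁻¹ *ᵥ st))
    ∧ (((M *ᵥ ((B - A) *ᵥ s)) ⬝ᵥ (M *ᵥ ((B - A) *ᵥ s))) / ((M⁻¹ *ᵥ s) ⬝ᵥ (M⁻¹ *ᵥ s))
        = ((M *ᵥ ((B - A) *ᵥ st)) ⬝ᵥ (M *ᵥ ((B - A) *ᵥ st))) / ((M⁻¹ *ᵥ st) ⬝ᵥ (M⁻¹ *ᵥ st))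
      ↔ inT s) := by
  have hMu : IsUnit M.det := hM.isUnit.map detMonoidHom
  have hMu' : IsUnit M⁻¹.det := M.isUnit_nonsing_inv_det hMu
  set ψ := M.mulVecEuclideanEquiv hMu
  set φ := M⁻¹.mulVecEuclideanEquiv hMu'
  set S := LinearMap.ker (B - A).toLin'
  set K := S.map (φ : (Fin n → ℝ) →ₗ[ℝ] EuclideanSpace ℝ (Fin n))
  have hGφ : ∀ a b, a ⬝ᵥ (G *ᵥ b) = ⟪φ a, φ b⟫ := fun a b => by
    rw [inner_mulVecEuclideanEquiv, hG, ← conjTranspose_eq_transpose_of_trivial,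
      hM.isHermitian.inv.eq]
  have hinT_iff : ∀ z, inT z ↔ φ z ∈ Kᗮ := fun z => by
    simp only [hinT, hGφ]
    exact (Submodule.mem_orthogonal_map_iff _ S z).symm
  simp only [hinT_iff] at hmem hmin ⊢
  have hker : s - st ∈ S := Submodule.sub_mem_of_forall_norm_map_sub_le φ hmem fun t ht => by
    have h := hmin t ht
    rwa [hGφ, hGφ, real_inner_self_eq_norm_sq, real_inner_self_eq_norm_sq,
      pow_le_pow_iff_left₀ (norm_nonneg _) (norm_nonneg _) two_ne_zero] at h
  have hφker : φ s - φ st ∈ K := map_sub φ s st ▸ Submodule.mem_map_of_mem hker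
  have hnum : (B - A) *ᵥ s = (B - A) *ᵥ st := by
    rw [← sub_eq_zero, ← mulVec_sub]
    exact hker
  have hnum_ne : (B - A) *ᵥ st ≠ 0 := fun h => hst <| φ.map_eq_zero_iff.1 <|
    Submodule.disjoint_def.1 K.orthogonal_disjoint _ (Submodule.mem_map_of_mem h) hmem
  have hquot := div_add_le_div_and_eq_iff
    (pow_pos (norm_pos_iff.2 (ψ.map_ne_zero_iff.2 hnum_ne)) 2)
    (pow_pos (norm_pos_iff.2 (φ.map_ne_zero_iff.2 hst)) 2) (sq_nonneg ‖φ s - φ st‖)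
  rw [sq_eq_zero_iff, norm_eq_zero, sub_eq_zero, ← Submodule.norm_sq_eq_add_norm_sub_sq hmem hφker,
    ← Submodule.mem_orthogonal_iff_eq_of_sub_mem hmem hφker] at hquot
  simpa only [hnum, ← norm_mulVecEuclideanEquiv_sq M hMu, ← norm_mulVecEuclideanEquiv_sq M⁻¹ hMu']
    using hquot
end

section
/- Let A be a symmetric positive definite n×n real matrix and B a nonsingular n×n real matrix. If s̃ is the A-orthogonal projection of s ∈ ℝⁿ onto the A-orthogonal complement of ker(B − A), then As̃ is the A⁻¹-orthogonal projection of As onto the A⁻¹-orthogonal complement of ker(B⁻¹ − A⁻¹). -/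
/-!
The map `z ↦ A z` is an isometry from `(ℝⁿ, ‖·‖_A)` onto `(ℝⁿ, ‖·‖_{A⁻¹})`, since
`(A u)ᵀ A⁻¹ (A u) = uᵀ A u`. It carries `ker (B - A)` onto `ker (B⁻¹ - A⁻¹)` (if `B y = A y` then
`B⁻¹ (A y) = y = A⁻¹ (A y)`), and, by symmetry of `A`, `z ⊥_A y ↔ A z ⊥_{A⁻¹} A y`. Hence it carries
the `A`-orthogonal complement of the first kernel onto the `A⁻¹`-orthogonal complement of the
second, and so maps the `A`-projection of `s` to the `A⁻¹`-projection of `A s`.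
-/

open Matrix

namespace Matrix

variable {m R : Type*} [Fintype m] [CommRing R]

def IsOrthToKer (G M : Matrix m m R) (z : m → R) : Prop :=
  ∀ x, M *ᵥ x = 0 → z ⬝ᵥ (G *ᵥ x) = 0

lemma IsSymm.mulVec_dotProduct {A : Matrix m m R} (hA : A.IsSymm) (v w : m → R) :
    (A *ᵥ v) ⬝ᵥ w = v ⬝ᵥ (A *ᵥ w) := by
  rw [dotProduct_mulVec, ← mulVec_transpose, hA.eq]

variable [DecidableEq m]

lemma inv_mulVec_mulVec {A : Matrix m m R} (hA : IsUnit A.det) (v : m → R) :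
    A⁻¹ *ᵥ (A *ᵥ v) = v := by
  rw [mulVec_mulVec, nonsing_inv_mul A hA, one_mulVec]

lemma mulVec_inv_mulVec {A : Matrix m m R} (hA : IsUnit A.det) (v : m → R) :
    A *ᵥ (A⁻¹ *ᵥ v) = v := by
  rw [mulVec_mulVec, mul_nonsing_inv A hA, one_mulVec]

lemma mulVec_dotProduct_inv_mulVec_mulVec {A : Matrix m m R} (hA : IsUnit A.det) (u : m → R) :
    (A *ᵥ u) ⬝ᵥ (A⁻¹ *ᵥ (A *ᵥ u)) = u ⬝ᵥ (A *ᵥ u) := by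
  rw [inv_mulVec_mulVec hA, dotProduct_comm]

lemma inv_sub_inv_mulVec_mulVec_eq_zero {A B : Matrix m m R} (hA : IsUnit A.det)
    (hB : IsUnit B.det) {y : m → R} (hy : (B - A) *ᵥ y = 0) :
    (B⁻¹ - A⁻¹) *ᵥ (A *ᵥ y) = 0 := by
  have hBA : B *ᵥ y = A *ᵥ y := by rwa [sub_mulVec, sub_eq_zero] at hy
  rw [sub_mulVec, inv_mulVec_mulVec hA, ← hBA, inv_mulVec_mulVec hB, sub_self]

lemma isOrthToKer_inv_mulVec_iff {A B : Matrix m m R} (hA : A.IsSymm) (hAdet : IsUnit A.det)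
    (hB : IsUnit B.det) {z : m → R} :
    IsOrthToKer A⁻¹ (B⁻¹ - A⁻¹) (A *ᵥ z) ↔ IsOrthToKer A (B - A) z := by
  constructor
  · intro h x hx
    have hz := h (A *ᵥ x) (inv_sub_inv_mulVec_mulVec_eq_zero hAdet hB hx)
    rwa [inv_mulVec_mulVec hAdet, hA.mulVec_dotProduct] at hz
  · intro h x hx
    have hAx : (B - A) *ᵥ (A⁻¹ *ᵥ x) = 0 := by
      simpa only [nonsing_inv_nonsing_inv _ hAdet, nonsing_inv_nonsing_inv _ hB] using
        inv_sub_inv_mulVec_mulVec_eq_zero (isUnit_nonsing_inv_det _ hAdet)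
          (isUnit_nonsing_inv_det _ hB) hx
    have hz := h _ hAx
    rwa [hA.mulVec_dotProduct]

end Matrix

/-- If s̃ is the A-orthogonal projection of s onto the A-orthogonal complement of
ker(B − A), then As̃ is the A⁻¹-orthogonal projection of As onto the A⁻¹-orthogonal
complement of ker(B⁻¹ − A⁻¹). Projections are characterized by membership plus
minimality of the weighted distance. -/
theorem stmt_14 (n : ℕ) (A B : Matrix (Fin n) (Fin n) ℝ)
    (hA : A.PosDef) (hB : IsUnit B.det)
    (s st : Fin n → ℝ)
    (inT : (Fin n → ℝ) → Prop)
    (hinT : inT = fun z => ∀ x : Fin n → ℝ, (B - A) *ᵥ x = 0 → z ⬝ᵥ (A *ᵥ x) = 0)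
    (hmem : inT st)
    (hmin : ∀ t : Fin n → ℝ, inT t →
      (s - st) ⬝ᵥ (A *ᵥ (s - st)) ≤ (s - t) ⬝ᵥ (A *ᵥ (s - t)))
    (inT' : (Fin n → ℝ) → Prop)
    (hinT' : inT' = fun z => ∀ x : Fin n → ℝ, (B⁻¹ - A⁻¹) *ᵥ x = 0 → z ⬝ᵥ (A⁻¹ *ᵥ x) = 0) :
    inT' (A *ᵥ st) ∧ ∀ t : Fin n → ℝ, inT' t →
      (A *ᵥ s - A *ᵥ st) ⬝ᵥ (A⁻¹ *ᵥ (A *ᵥ s - A *ᵥ st))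
        ≤ (A *ᵥ s - t) ⬝ᵥ (A⁻¹ *ᵥ (A *ᵥ s - t)) := by
  subst hinT hinT'
  have hAsymm : A.IsSymm := isHermitian_iff_isSymm.mp hA.isHermitian
  have hAdet : IsUnit A.det := (isUnit_iff_isUnit_det A).mp hA.isUnit
  have horth (z) := isOrthToKer_inv_mulVec_iff (B := B) (z := z) hAsymm hAdet hB
  refine ⟨(horth st).2 hmem, fun t ht => ?_⟩
  obtain ⟨u, rfl⟩ : ∃ u, A *ᵥ u = t := ⟨A⁻¹ *ᵥ t, mulVec_inv_mulVec hAdet t⟩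
  rw [← mulVec_sub, ← mulVec_sub, mulVec_dotProduct_inv_mulVec_mulVec hAdet,
    mulVec_dotProduct_inv_mulVec_mulVec hAdet]
  exact hmin u ((horth u).1 ht)
end

section
/- Let A be a symmetric positive definite n×n real matrix and B a nonsingular n×n real matrix. If S is a subspace of ker(B − A), then A·S := { As : s ∈ S } is a subspace of ker(B⁻¹ − A⁻¹). Moreover, if s̃ is the A-orthogonal projection of s onto the A-orthogonal complement of S, then As̃ is the A⁻¹-orthogonal projection of As onto the A⁻¹-orthogonal complement of A·S. -/
/-!
Multiplication by `A` is an isometry from `(ℝⁿ, ⟨·,·⟩_A)` onto `(ℝⁿ, ⟨·,·⟩_{A⁻¹})`, since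
`⟨Ax, Ay⟩_{A⁻¹} = xᵀ A A⁻¹ A y = ⟨x, y⟩_A`. An isometry carries `A`-orthogonal complements to
`A⁻¹`-orthogonal complements and nearest points to nearest points. The kernel statement is
immediate: `Bx = Ax` gives `B⁻¹(Ax) = x = A⁻¹(Ax)`.
-/

open Matrix

namespace Matrix

variable {n R : Type*} [Fintype n] [CommRing R] {A B : Matrix n n R}

theorem IsSymm.mulVec_dotProduct_s15 (hAsymm : A.IsSymm) (x y : n → R) :
    (A *ᵥ x) ⬝ᵥ y = x ⬝ᵥ (A *ᵥ y) := by
  rw [dotProduct_comm, dotProduct_mulVec, ← mulVec_transpose, hAsymm.eq, dotProduct_comm]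

variable [DecidableEq n]

def gOrthogonal (G : Matrix n n R) (S : Submodule R (n → R)) : Set (n → R) :=
  {z | ∀ x ∈ S, z ⬝ᵥ (G *ᵥ x) = 0}

theorem nonsing_inv_mulVec_mulVec (hA : IsUnit A.det) (x : n → R) : A⁻¹ *ᵥ (A *ᵥ x) = x := by
  rw [mulVec_mulVec, nonsing_inv_mul A hA, one_mulVec]

theorem map_mulVecLin_le_ker_nonsing_inv_sub (hA : IsUnit A.det) (hB : IsUnit B.det)
    {S : Submodule R (n → R)} (hS : S ≤ LinearMap.ker (B - A).mulVecLin) :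
    S.map A.mulVecLin ≤ LinearMap.ker (B⁻¹ - A⁻¹).mulVecLin := by
  rintro _ ⟨x, hx, rfl⟩
  have hBx : B *ᵥ x = A *ᵥ x := sub_eq_zero.mp (by simpa [sub_mulVec] using hS hx)
  simp only [LinearMap.mem_ker, mulVecLin_apply, sub_mulVec]
  rw [← hBx, nonsing_inv_mulVec_mulVec hB, hBx, nonsing_inv_mulVec_mulVec hA, sub_self]

theorem mulVec_mem_gOrthogonal_nonsing_inv_map_iff (hA : IsUnit A.det) (hAsymm : A.IsSymm)
    {S : Submodule R (n → R)} {z : n → R} :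
    A *ᵥ z ∈ A⁻¹.gOrthogonal (S.map A.mulVecLin) ↔ z ∈ A.gOrthogonal S := by
  simp only [gOrthogonal, Set.mem_ofPred_eq, Submodule.mem_map, mulVecLin_apply,
    forall_exists_index, and_imp, forall_apply_eq_imp_iff₂, nonsing_inv_mulVec_mulVec hA,
    hAsymm.mulVec_dotProduct_s15]

theorem mulVec_image_gOrthogonal (hA : IsUnit A.det) (hAsymm : A.IsSymm)
    (S : Submodule R (n → R)) :
    A.mulVec '' A.gOrthogonal S = A⁻¹.gOrthogonal (S.map A.mulVecLin) := by
  have hsurj : Function.Surjective A.mulVec :=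
    mulVec_surjective_iff_isUnit.mpr ((isUnit_iff_isUnit_det A).mpr hA)
  rw [← Set.image_preimage_eq (A⁻¹.gOrthogonal (S.map A.mulVecLin)) hsurj]
  exact congrArg _ (Set.ext fun _ ↦ (mulVec_mem_gOrthogonal_nonsing_inv_map_iff hA hAsymm).symm)

theorem isMinOn_mulVec_image [Preorder R] (hA : IsUnit A.det) {T : Set (n → R)} {s p : n → R}
    (hp : IsMinOn (fun t ↦ (s - t) ⬝ᵥ (A *ᵥ (s - t))) T p) :
    IsMinOn (fun u ↦ (A *ᵥ s - u) ⬝ᵥ (A⁻¹ *ᵥ (A *ᵥ s - u))) (A.mulVec '' T) (A *ᵥ p) := by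
  have hform (t : n → R) : (A *ᵥ s - A *ᵥ t) ⬝ᵥ (A⁻¹ *ᵥ (A *ᵥ s - A *ᵥ t))
      = (s - t) ⬝ᵥ (A *ᵥ (s - t)) := by
    rw [← mulVec_sub, nonsing_inv_mulVec_mulVec hA, dotProduct_comm]
  rintro _ ⟨t, ht, rfl⟩
  simpa only [Set.mem_ofPred_eq, hform] using hp ht

end Matrix

/-- If S ⊆ ker(B − A), then A·S ⊆ ker(B⁻¹ − A⁻¹); moreover the A-projection of s onto
the A-orthogonal complement of S maps under A to the A⁻¹-projection of As onto the
A⁻¹-orthogonal complement of A·S. -/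
theorem stmt_15 (n : ℕ) (A B : Matrix (Fin n) (Fin n) ℝ)
    (hA : A.PosDef) (hB : IsUnit B.det)
    (S : Submodule ℝ (Fin n → ℝ)) (hS : ∀ x ∈ S, (B - A) *ᵥ x = 0)
    (s st : Fin n → ℝ)
    (inT : (Fin n → ℝ) → Prop)
    (hinT : inT = fun z => ∀ x ∈ S, z ⬝ᵥ (A *ᵥ x) = 0)
    (hmem : inT st)
    (hmin : ∀ t : Fin n → ℝ, inT t →
      (s - st) ⬝ᵥ (A *ᵥ (s - st)) ≤ (s - t) ⬝ᵥ (A *ᵥ (s - t)))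
    (inT' : (Fin n → ℝ) → Prop)
    (hinT' : inT' = fun z => ∀ u ∈ S.map A.mulVecLin, z ⬝ᵥ (A⁻¹ *ᵥ u) = 0) :
    (S.map A.mulVecLin ≤ LinearMap.ker (B⁻¹ - A⁻¹).mulVecLin)
    ∧ inT' (A *ᵥ st)
    ∧ ∀ t : Fin n → ℝ, inT' t →
        (A *ᵥ s - A *ᵥ st) ⬝ᵥ (A⁻¹ *ᵥ (A *ᵥ s - A *ᵥ st))
          ≤ (A *ᵥ s - t) ⬝ᵥ (A⁻¹ *ᵥ (A *ᵥ s - t)) := by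
  subst hinT hinT'
  have hAdet : IsUnit A.det := (isUnit_iff_isUnit_det A).mp hA.isUnit
  have hAsymm : A.IsSymm := isHermitian_iff_isSymm.mp hA.isHermitian
  have hproj := isMinOn_mulVec_image (T := A.gOrthogonal S) hAdet fun t ht ↦ hmin t ht
  rw [mulVec_image_gOrthogonal hAdet hAsymm] at hproj
  exact ⟨map_mulVecLin_le_ker_nonsing_inv_sub hAdet hB hS,
    (mulVec_mem_gOrthogonal_nonsing_inv_map_iff hAdet hAsymm).mpr hmem, fun t ht ↦ hproj ht⟩
end

section
/- Consider the Broyden good update process: given n×n real matrices A and B₀, and vectors s₀,…,s_{n−1} ∈ ℝⁿ \ {0} that are pairwise Euclidean-orthogonal (sₖᵀsⱼ = 0 for k ≠ j), define B_{k+1} = B_k + (Asₖ − B_k sₖ)sₖᵀ/(sₖᵀsₖ). Then B_n = A. -/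
/-!
Each Broyden update enforces the secant condition `B_{k+1} s_k = A s_k`, and since the correction
term is a multiple of `s_kᵀ`, it leaves `B s_j` unchanged for every `s_j` orthogonal to `s_k`.
Hence `B_n` agrees with `A` on all of `s_0, …, s_{n-1}`, which are `n` pairwise orthogonal nonzero
vectors of `ℝⁿ` and therefore a basis.
-/

open Matrix

variable {K m : Type*} [Field K] [Fintype m]

namespace Matrix

theorem linearIndependent_of_dotProduct_eq_zero {ι : Type*} {v : ι → m → K}
    (hself : ∀ i, v i ⬝ᵥ v i ≠ 0) (horth : ∀ i j, i ≠ j → v i ⬝ᵥ v j = 0) :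
    LinearIndependent K v :=
  LinearMap.BilinForm.linearIndependent_of_iIsOrtho (B := dotProductBilin K K)
    (fun i j hij => horth i j hij) hself

theorem eq_of_mulVec_eq_of_linearIndependent [DecidableEq m] {ι : Type*} [Fintype ι]
    {v : ι → m → K} (hv : LinearIndependent K v) (hcard : Fintype.card ι = Fintype.card m)
    {M N : Matrix m m K} (h : ∀ i, M *ᵥ v i = N *ᵥ v i) : M = N := by
  have hspan : Submodule.span K (Set.range v) = ⊤ :=
    hv.span_eq_top_of_card_eq_finrank' (by rw [hcard, Module.finrank_fintype_fun_eq_card])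
  exact toLin'.injective (LinearMap.ext_on_range hspan fun i => by simpa using h i)

end Matrix

def broydenUpdate (A B : Matrix m m K) (s : m → K) : Matrix m m K :=
  B + (s ⬝ᵥ s)⁻¹ • vecMulVec (A *ᵥ s - B *ᵥ s) s

theorem broydenUpdate_mulVec (A B : Matrix m m K) (s t : m → K) :
    broydenUpdate A B s *ᵥ t = B *ᵥ t + ((s ⬝ᵥ s)⁻¹ * (s ⬝ᵥ t)) • (A *ᵥ s - B *ᵥ s) := by
  rw [broydenUpdate, add_mulVec, smul_mulVec, vecMulVec_mulVec, op_smul_eq_smul, smul_smul]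

theorem broydenUpdate_mulVec_self (A B : Matrix m m K) {s : m → K} (hs : s ⬝ᵥ s ≠ 0) :
    broydenUpdate A B s *ᵥ s = A *ᵥ s := by
  rw [broydenUpdate_mulVec, inv_mul_cancel₀ hs, one_smul, add_sub_cancel]

theorem broydenUpdate_mulVec_of_dotProduct_eq_zero (A B : Matrix m m K) {s t : m → K}
    (h : s ⬝ᵥ t = 0) : broydenUpdate A B s *ᵥ t = B *ᵥ t := by
  rw [broydenUpdate_mulVec, h, mul_zero, zero_smul, add_zero]

theorem broyden_mulVec_eq_of_lt {p : ℕ} (A : Matrix m m K) (B : ℕ → Matrix m m K)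
    (s : Fin p → m → K) (hself : ∀ k, s k ⬝ᵥ s k ≠ 0)
    (horth : ∀ k j, k ≠ j → s k ⬝ᵥ s j = 0)
    (hrec : ∀ k : Fin p, B (k + 1) = broydenUpdate A (B k) (s k)) :
    ∀ k ≤ p, ∀ j : Fin p, (j : ℕ) < k → B k *ᵥ s j = A *ᵥ s j := by
  intro k
  induction k with
  | zero => intro _ j hj; omega
  | succ k ih =>
    intro hk j hj
    have hrec_k := hrec ⟨k, hk⟩
    rw [Fin.val_mk] at hrec_k
    rw [hrec_k]
    rcases eq_or_ne j ⟨k, hk⟩ with rfl | hne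
    · exact broydenUpdate_mulVec_self A _ (hself _)
    · rw [broydenUpdate_mulVec_of_dotProduct_eq_zero A _ (horth _ _ hne.symm)]
      have hjk : (j : ℕ) ≠ k := fun h => hne (Fin.ext h)
      exact ih (Nat.le_of_succ_le hk) j (by omega)

/-- Broyden good updates along n pairwise orthogonal nonzero directions reach B_n = A. -/
theorem stmt_16 (n : ℕ) (A : Matrix (Fin n) (Fin n) ℝ)
    (B : ℕ → Matrix (Fin n) (Fin n) ℝ)
    (s : Fin n → (Fin n → ℝ))
    (hs : ∀ k, s k ≠ 0)
    (horth : ∀ k j, k ≠ j → s k ⬝ᵥ s j = 0)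
    (hrec : ∀ k : Fin n,
      B (k + 1) = B k + (s k ⬝ᵥ s k)⁻¹ • vecMulVec (A *ᵥ s k - B k *ᵥ s k) (s k)) :
    B n = A := by
  have hself : ∀ k, s k ⬝ᵥ s k ≠ 0 := fun k => dotProduct_self_eq_zero.not.mpr (hs k)
  have hsecant : ∀ j, B n *ᵥ s j = A *ᵥ s j :=
    fun j => broyden_mulVec_eq_of_lt A B s hself horth hrec n le_rfl j j.isLt
  exact eq_of_mulVec_eq_of_linearIndependent
    (linearIndependent_of_dotProduct_eq_zero hself horth) rfl hsecant
end

section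
/- Let A, B_k be symmetric n×n real matrices with s_kᵀy_k ≠ 0 and s_kᵀB_k s_k ≠ 0, where y_k = A s_k, and let B_{k+1} be given by the Broyden family update B_{k+1} = B_k + y_k y_kᵀ/(s_kᵀy_k) − B_k s_k s_kᵀB_k/(s_kᵀB_k s_k) + θ ω_k ω_kᵀ with ω_k = √(s_kᵀB_k s_k)(y_k/(s_kᵀy_k) − B_k s_k/(s_kᵀB_k s_k)). If ξ ∈ ℝⁿ satisfies (B_k − A)ξ = 0 and s_kᵀAξ = 0, then (B_{k+1} − A)ξ = 0. -/
open Matrix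

theorem Matrix.IsSymm.mulVec_dotProduct_s18 {m α : Type*} [Fintype m] [CommSemiring α]
    {M : Matrix m m α} (hM : M.IsSymm) (u v : m → α) :
    M *ᵥ u ⬝ᵥ v = u ⬝ᵥ M *ᵥ v := by
  rw [dotProduct_mulVec, ← mulVec_transpose, hM.eq]

theorem Matrix.vecMulVec_mulVec_of_dotProduct_eq_zero {m n α : Type*} [Fintype n] [Semiring α]
    (u : m → α) {v w : n → α} (h : v ⬝ᵥ w = 0) :
    vecMulVec u v *ᵥ w = 0 := by
  rw [vecMulVec_mulVec, h, MulOpposite.op_zero, zero_smul]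

/-- Each correction term of the update is a multiple of `u uᵀ` with `u ∈ span {y, Bk s}`, and both
`y` and `Bk s` are orthogonal to `ξ`, so the update does not move `Bk *ᵥ ξ = A *ᵥ ξ`. -/
theorem stmt_18_general (n : ℕ) (A Bk : Matrix (Fin n) (Fin n) ℝ)
    (hA : A.IsSymm) (hBk : Bk.IsSymm) (θ : ℝ)
    (s : Fin n → ℝ) (y : Fin n → ℝ) (hy : y = A *ᵥ s)
    (ω : Fin n → ℝ)
    (hω : ω = Real.sqrt (s ⬝ᵥ (Bk *ᵥ s)) •
      ((s ⬝ᵥ y)⁻¹ • y - (s ⬝ᵥ (Bk *ᵥ s))⁻¹ • (Bk *ᵥ s)))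
    (Bk1 : Matrix (Fin n) (Fin n) ℝ)
    (hBk1 : Bk1 = Bk + (s ⬝ᵥ y)⁻¹ • vecMulVec y y
      - (s ⬝ᵥ (Bk *ᵥ s))⁻¹ • vecMulVec (Bk *ᵥ s) (Bk *ᵥ s)
      + θ • vecMulVec ω ω)
    (ξ : Fin n → ℝ) (hker : (Bk - A) *ᵥ ξ = 0) (horth : s ⬝ᵥ (A *ᵥ ξ) = 0) :
    (Bk1 - A) *ᵥ ξ = 0 := by
  have hBξ : Bk *ᵥ ξ = A *ᵥ ξ := sub_eq_zero.mp (by rwa [← sub_mulVec])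
  have hyξ : y ⬝ᵥ ξ = 0 := by rw [hy, hA.mulVec_dotProduct_s18, horth]
  have hBsξ : Bk *ᵥ s ⬝ᵥ ξ = 0 := by rw [hBk.mulVec_dotProduct_s18, hBξ, horth]
  have hωξ : ω ⬝ᵥ ξ = 0 := by
    rw [hω, smul_dotProduct, sub_dotProduct, smul_dotProduct, smul_dotProduct, hyξ, hBsξ]
    simp
  rw [hBk1]
  simp only [sub_mulVec, add_mulVec, smul_mulVec, hBξ, sub_self, smul_zero, add_zero, sub_zero,
    vecMulVec_mulVec_of_dotProduct_eq_zero _ hyξ, vecMulVec_mulVec_of_dotProduct_eq_zero _ hBsξ,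
    vecMulVec_mulVec_of_dotProduct_eq_zero _ hωξ]

/-- Kernel preservation for the Broyden family update: if (B_k − A)ξ = 0 and
s_kᵀAξ = 0, then (B_{k+1} − A)ξ = 0. -/
theorem stmt_18 (n : ℕ) (A Bk : Matrix (Fin n) (Fin n) ℝ)
    (hA : A.IsSymm) (hBk : Bk.IsSymm) (θ : ℝ)
    (s : Fin n → ℝ) (y : Fin n → ℝ) (hy : y = A *ᵥ s)
    (hsy : s ⬝ᵥ y ≠ 0) (hsBs : s ⬝ᵥ (Bk *ᵥ s) ≠ 0)
    (ω : Fin n → ℝ)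
    (hω : ω = Real.sqrt (s ⬝ᵥ (Bk *ᵥ s)) •
      ((s ⬝ᵥ y)⁻¹ • y - (s ⬝ᵥ (Bk *ᵥ s))⁻¹ • (Bk *ᵥ s)))
    (Bk1 : Matrix (Fin n) (Fin n) ℝ)
    (hBk1 : Bk1 = Bk + (s ⬝ᵥ y)⁻¹ • vecMulVec y y
      - (s ⬝ᵥ (Bk *ᵥ s))⁻¹ • vecMulVec (Bk *ᵥ s) (Bk *ᵥ s)
      + θ • vecMulVec ω ω)
    (ξ : Fin n → ℝ) (hker : (Bk - A) *ᵥ ξ = 0) (horth : s ⬝ᵥ (A *ᵥ ξ) = 0) :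
    (Bk1 - A) *ᵥ ξ = 0 :=
  stmt_18_general n A Bk hA hBk θ s y hy ω hω Bk1 hBk1 ξ hker horth
end
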